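/- Let W be the affine Coxeter group generated by the affine reflections associated to a crystallographic root system Φ spanning ℝ^n. For every λ ∈ L, the following three quantities are equal: the real dimension of λ, the integral dimension of λ, and the minimum of ℓ_R(u) over all u ∈ W with u(0) = λ. -/

import Mathlib

open RealInnerProductSpace

noncomputable section

/-- A crystallographic (reduced) root system spanning `ℝⁿ`. -/
structure IsRootSystem (n : ℕ) (Φ : Set (EuclideanSpace ℝ (Fin n))) : Prop where
  finite : Φ.Finite
  nonzero : ∀ α ∈ Φ, α ≠ 0
  spans : Submodule.span ℝ Φ = ⊤
  reflect_mem : ∀ α ∈ Φ, ∀ β ∈ Φ, β - (2 * ⟪β, α⟫ / ⟪α, α⟫) • α ∈ Φ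
  crystallographic : ∀ α ∈ Φ, ∀ β ∈ Φ, ∃ z : ℤ, (z : ℝ) = 2 * ⟪β, α⟫ / ⟪α, α⟫
  reduced : ∀ α ∈ Φ, ∀ c : ℝ, c • α ∈ Φ → c = 1 ∨ c = -1

/-- The coroot `α∨ = (2/⟨α,α⟩) α`. -/
def coroot {n : ℕ} (α : EuclideanSpace ℝ (Fin n)) : EuclideanSpace ℝ (Fin n) :=
  (2 / ⟪α, α⟫) • α

lemma affRefl_involutive {n : ℕ} (α : EuclideanSpace ℝ (Fin n)) (i : ℤ) :
    Function.Involutive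
      (fun x : EuclideanSpace ℝ (Fin n) => x - (⟪x, α⟫ - (i : ℝ)) • coroot α) := by
  intro x
  by_cases h : ⟪α, α⟫ = 0
  · simp only [coroot, h, div_zero, zero_smul, smul_zero, sub_zero]
  · have hv : ⟪coroot α, α⟫ = 2 := by
      rw [coroot, real_inner_smul_left, div_mul_cancel₀ _ h]
    dsimp only
    rw [inner_sub_left, real_inner_smul_left, hv]
    module

/-- The affine reflection `r_{α,i}` across the hyperplane `{x : ⟨x,α⟩ = i}`,
as a permutation of `ℝⁿ`. -/
def affRefl {n : ℕ} (α : EuclideanSpace ℝ (Fin n)) (i : ℤ) :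
    Equiv.Perm (EuclideanSpace ℝ (Fin n)) :=
  (affRefl_involutive α i).toPerm _

/-- The set `R` of all affine reflections `r_{α,i}`, `α ∈ Φ`, `i ∈ ℤ`. -/
def affR {n : ℕ} (Φ : Set (EuclideanSpace ℝ (Fin n))) :
    Set (Equiv.Perm (EuclideanSpace ℝ (Fin n))) :=
  {w | ∃ α ∈ Φ, ∃ i : ℤ, w = affRefl α i}

/-- The affine Coxeter group `W` generated by all affine reflections. -/
def affW {n : ℕ} (Φ : Set (EuclideanSpace ℝ (Fin n))) :
    Subgroup (Equiv.Perm (EuclideanSpace ℝ (Fin n))) :=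
  Subgroup.closure (affR Φ)

/-- The set `R₀ = {r_{α,0} : α ∈ Φ}` of reflections through the origin. -/
def linR {n : ℕ} (Φ : Set (EuclideanSpace ℝ (Fin n))) :
    Set (Equiv.Perm (EuclideanSpace ℝ (Fin n))) :=
  {w | ∃ α ∈ Φ, w = affRefl α 0}

/-- The finite reflection group `W₀` generated by the reflections fixing the origin. -/
def linW {n : ℕ} (Φ : Set (EuclideanSpace ℝ (Fin n))) :
    Subgroup (Equiv.Perm (EuclideanSpace ℝ (Fin n))) :=
  Subgroup.closure (linR Φ)

/-- The translation `t_λ : x ↦ x + λ` as a permutation of `ℝⁿ`. -/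
def transPerm {n : ℕ} (lam : EuclideanSpace ℝ (Fin n)) :
    Equiv.Perm (EuclideanSpace ℝ (Fin n)) :=
  Equiv.addRight lam

/-- The coroot lattice `L = ℤΦ∨`: all integral linear combinations of coroots. -/
def corootLattice {n : ℕ} (Φ : Set (EuclideanSpace ℝ (Fin n))) :
    AddSubgroup (EuclideanSpace ℝ (Fin n)) :=
  AddSubgroup.closure (coroot '' Φ)

/-- The word length of `w` with respect to a set `R`: the minimal `m` such that `w`
is a product of `m` elements of `R` (`⊤` if there is no such product). -/
def wordLength {G : Type*} [Monoid G] (R : Set G) (w : G) : ℕ∞ :=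
  sInf {m : ℕ∞ | ∃ l : List G, (∀ r ∈ l, r ∈ R) ∧ l.prod = w ∧ (l.length : ℕ∞) = m}

/-- `λ` has integral dimension `k` iff `k` is least such that `λ` is an integral
combination of `k` coroots. -/
def intDim {n : ℕ} (Φ : Set (EuclideanSpace ℝ (Fin n)))
    (lam : EuclideanSpace ℝ (Fin n)) : ℕ :=
  sInf {k : ℕ | ∃ (c : Fin k → ℤ) (α : Fin k → EuclideanSpace ℝ (Fin n)),
    (∀ i, α i ∈ Φ) ∧ lam = ∑ i, c i • coroot (α i)}

/-- `λ` has real dimension `k` iff `k` is the least dimension of a subspace of `ℝⁿ`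
spanned by a set of coroots and containing `λ`. -/
def realDim {n : ℕ} (Φ : Set (EuclideanSpace ℝ (Fin n)))
    (lam : EuclideanSpace ℝ (Fin n)) : ℕ :=
  sInf {k : ℕ | ∃ S : Set (EuclideanSpace ℝ (Fin n)), S ⊆ coroot '' Φ ∧
    lam ∈ Submodule.span ℝ S ∧ Module.finrank ℝ ↥(Submodule.span ℝ S) = k}

/-- An abstract finite crystallographic reduced root "set". -/
structure RSet (n : ℕ) (Ψ : Set (EuclideanSpace ℝ (Fin n))) : Prop where
  finite : Ψ.Finite
  nonzero : ∀ γ ∈ Ψ, γ ≠ 0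
  reflect_mem : ∀ γ ∈ Ψ, ∀ δ ∈ Ψ, δ - (2 * ⟪δ, γ⟫ / ⟪γ, γ⟫) • γ ∈ Ψ
  crystallographic : ∀ γ ∈ Ψ, ∀ δ ∈ Ψ, ∃ z : ℤ, (z : ℝ) = 2 * ⟪δ, γ⟫ / ⟪γ, γ⟫
  reduced : ∀ γ ∈ Ψ, ∀ c : ℝ, c • γ ∈ Ψ → c = 1 ∨ c = -1

namespace RSet

variable {Ψ : Set (EuclideanSpace ℝ (Fin n))}

lemma inner_self_pos (h : RSet n Ψ) {γ : EuclideanSpace ℝ (Fin n)} (hγ : γ ∈ Ψ) :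
    0 < ⟪γ, γ⟫ := by
  rw [real_inner_self_eq_norm_sq]
  have := norm_pos_iff.mpr (h.nonzero γ hγ)
  positivity

lemma neg_mem (h : RSet n Ψ) {γ : EuclideanSpace ℝ (Fin n)} (hγ : γ ∈ Ψ) : -γ ∈ Ψ := by
  have hne := (h.inner_self_pos hγ).ne'
  have h2 : 2 * ⟪γ, γ⟫ / ⟪γ, γ⟫ = (2:ℝ) := by rw [mul_div_assoc, div_self hne, mul_one]
  have := h.reflect_mem γ hγ γ hγ
  rw [h2] at this
  rwa [show γ - (2:ℝ) • γ = -γ by module] at this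

lemma sub_mem (h : RSet n Ψ) {γ δ : EuclideanSpace ℝ (Fin n)} (hγ : γ ∈ Ψ) (hδ : δ ∈ Ψ)
    (hpos : 0 < ⟪γ, δ⟫) (hne : γ ≠ δ) : γ - δ ∈ Ψ := by
  have ha : 0 < ⟪γ, γ⟫ := h.inner_self_pos hγ
  have hb : 0 < ⟪δ, δ⟫ := h.inner_self_pos hδ
  obtain ⟨p, hp⟩ := h.crystallographic δ hδ γ hγ
  obtain ⟨q, hq⟩ := h.crystallographic γ hγ δ hδ
  rw [real_inner_comm γ δ] at hq
  have hp1 : 1 ≤ p := by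
    have h0 : (0:ℝ) < (p:ℝ) := by rw [hp]; positivity
    have : (0:ℤ) < p := by exact_mod_cast h0
    omega
  have hq1 : 1 ≤ q := by
    have h0 : (0:ℝ) < (q:ℝ) := by rw [hq]; positivity
    have : (0:ℤ) < q := by exact_mod_cast h0
    omega
  have hcs : ⟪γ, δ⟫ * ⟪γ, δ⟫ ≤ ⟪γ, γ⟫ * ⟪δ, δ⟫ := real_inner_mul_inner_self_le γ δ
  have hpq4 : p * q ≤ 4 := by
    have : ((p : ℝ)) * q ≤ 4 := by
      rw [hp, hq, div_mul_div_comm, div_le_iff₀ (by positivity)]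
      nlinarith [hcs]
    exact_mod_cast this
  have hcase : p = 1 ∨ q = 1 ∨ (p = 2 ∧ q = 2) := by
    have hp4 : p ≤ 4 := by nlinarith
    interval_cases p <;> omega
  rcases hcase with h1 | h1 | ⟨h1, h2⟩
  · have := h.reflect_mem δ hδ γ hγ
    rw [← hp, h1] at this
    simpa using this
  · have hmem := h.reflect_mem γ hγ δ hδ
    rw [real_inner_comm γ δ, ← hq, h1] at hmem
    have := h.neg_mem hmem
    simpa [neg_sub] using this
  · exfalso
    have hgd : ⟪γ, δ⟫ = ⟪δ, δ⟫ := by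
      have hpe : 2 * ⟪γ, δ⟫ / ⟪δ, δ⟫ = (2:ℝ) := by rw [← hp, h1]; norm_num
      rw [div_eq_iff hb.ne'] at hpe
      linarith
    have hdg : ⟪γ, δ⟫ = ⟪γ, γ⟫ := by
      have hqe : 2 * ⟪γ, δ⟫ / ⟪γ, γ⟫ = (2:ℝ) := by rw [← hq, h2]; norm_num
      rw [div_eq_iff ha.ne'] at hqe
      linarith
    have hz : ⟪γ - δ, γ - δ⟫ = 0 := by
      rw [inner_sub_sub_self]
      have := real_inner_comm γ δ
      linarith
    exact hne (sub_eq_zero.mp (inner_self_eq_zero.mp hz))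

end RSet


section Coroot

variable {n : ℕ} {Φ : Set (EuclideanSpace ℝ (Fin n))}

lemma inner_self_pos_of_ne {γ : EuclideanSpace ℝ (Fin n)} (hγ : γ ≠ 0) : 0 < ⟪γ, γ⟫ := by
  rw [real_inner_self_eq_norm_sq]
  have := norm_pos_iff.mpr hγ
  positivity

lemma coroot_ne_zero {α : EuclideanSpace ℝ (Fin n)} (hα : α ≠ 0) : coroot α ≠ 0 := by
  have ha := inner_self_pos_of_ne hα
  exact smul_ne_zero (by positivity) hα

lemma coroot_neg (α : EuclideanSpace ℝ (Fin n)) : coroot (-α) = - coroot α := by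
  rw [coroot, coroot, inner_neg_neg, smul_neg]

lemma coroot_ratio {α β : EuclideanSpace ℝ (Fin n)} (hα : α ≠ 0) (hβ : β ≠ 0) :
    2 * ⟪coroot β, coroot α⟫ / ⟪coroot α, coroot α⟫ = 2 * ⟪β, α⟫ / ⟪β, β⟫ := by
  have ha := (inner_self_pos_of_ne hα).ne'
  have hb := (inner_self_pos_of_ne hβ).ne'
  rw [coroot, coroot, real_inner_smul_left, real_inner_smul_right, real_inner_smul_left,
    real_inner_smul_right]
  set a := ⟪α, α⟫
  set b := ⟪β, β⟫
  set x := ⟪β, α⟫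
  field_simp

lemma reflect_norm {α β : EuclideanSpace ℝ (Fin n)} (hα : α ≠ 0) :
    ⟪β - (2 * ⟪β, α⟫ / ⟪α, α⟫) • α, β - (2 * ⟪β, α⟫ / ⟪α, α⟫) • α⟫ = ⟪β, β⟫ := by
  have ha := (inner_self_pos_of_ne hα).ne'
  rw [inner_sub_sub_self, real_inner_smul_right, real_inner_smul_left, real_inner_smul_left,
    real_inner_smul_right, real_inner_comm α β]
  set a := ⟪α, α⟫
  set b := ⟪β, β⟫
  set x := ⟪β, α⟫
  field_simp
  ring

lemma coroot_reflect {α β : EuclideanSpace ℝ (Fin n)} (hα : α ≠ 0) (hβ : β ≠ 0) :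
    coroot β - (2 * ⟪coroot β, coroot α⟫ / ⟪coroot α, coroot α⟫) • coroot α
      = coroot (β - (2 * ⟪β, α⟫ / ⟪α, α⟫) • α) := by
  have ha := (inner_self_pos_of_ne hα).ne'
  have hb := (inner_self_pos_of_ne hβ).ne'
  rw [coroot_ratio hα hβ]
  rw [coroot, coroot, coroot, reflect_norm hα]
  set a := ⟪α, α⟫
  set b := ⟪β, β⟫
  set x := ⟪β, α⟫
  match_scalars <;> field_simp <;> ring

theorem IsRootSystem.rset (hΦ : IsRootSystem n Φ) : RSet n (coroot '' Φ) := by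
  constructor
  · exact hΦ.finite.image _
  · rintro _ ⟨α, hα, rfl⟩
    exact coroot_ne_zero (hΦ.nonzero α hα)
  · rintro _ ⟨α, hα, rfl⟩ _ ⟨β, hβ, rfl⟩
    exact ⟨β - (2 * ⟪β, α⟫ / ⟪α, α⟫) • α, hΦ.reflect_mem α hα β hβ,
      (coroot_reflect (hΦ.nonzero α hα) (hΦ.nonzero β hβ)).symm⟩
  · rintro _ ⟨α, hα, rfl⟩ _ ⟨β, hβ, rfl⟩
    obtain ⟨z, hz⟩ := hΦ.crystallographic β hβ α hα
    exact ⟨z, by rw [coroot_ratio (hΦ.nonzero α hα) (hΦ.nonzero β hβ), real_inner_comm α β, hz]⟩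
  · rintro _ ⟨α, hα, rfl⟩ c hc
    obtain ⟨β, hβ, hcb⟩ := hc
    have ha := (inner_self_pos_of_ne (hΦ.nonzero α hα)).ne'
    have hb := (inner_self_pos_of_ne (hΦ.nonzero β hβ)).ne'
    have hgen : ∀ x : ℝ, x ≠ 0 → x / 2 * (2 / x) = 1 := by intro x hx; field_simp
    set a := ⟪α, α⟫ with hadef
    set b := ⟪β, β⟫ with hbdef
    have hcor : (b / 2) • coroot β = β := by
      rw [coroot, ← hbdef, smul_smul, hgen b hb, one_smul]
    have hβα : (b / 2 * (c * (2 / a))) • α = β := by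
      rw [← hcor, hcb, coroot, ← hadef, smul_smul, smul_smul, mul_assoc]
    rcases hΦ.reduced α hα _ (by rw [hβα]; exact hβ) with h1 | h1
    · have hba : β = α := by rw [← hβα, h1, one_smul]
      rw [hba] at hcb
      have hz : (c - 1) • coroot α = 0 := by
        rw [sub_smul, one_smul, ← hcb, sub_self]
      rcases smul_eq_zero.mp hz with h | h
      · left; linarith [sub_eq_zero.mp h]
      · exact absurd h (coroot_ne_zero (hΦ.nonzero α hα))
    · have hba : β = -α := by rw [← hβα, h1, neg_one_smul]
      rw [hba, coroot_neg] at hcb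
      have hz : (c + 1) • coroot α = 0 := by
        rw [add_smul, one_smul, ← hcb]
        exact neg_add_cancel _
      rcases smul_eq_zero.mp hz with h | h
      · right; linarith [eq_neg_of_add_eq_zero_left h]
      · exact absurd h (coroot_ne_zero (hΦ.nonzero α hα))

end Coroot


section Aux

variable {n : ℕ}

local notation "E" => EuclideanSpace ℝ (Fin n)

lemma closure_le_span_real (s : Set (EuclideanSpace ℝ (Fin n))) :
    (AddSubgroup.closure s : Set (EuclideanSpace ℝ (Fin n))) ⊆ (Submodule.span ℝ s : Set _) := by
  intro x hx
  refine AddSubgroup.closure_le ((Submodule.span ℝ s).toAddSubgroup) |>.mpr ?_ hx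
  exact Submodule.subset_span

lemma submonoid_closure_le_span_real (s : Set (EuclideanSpace ℝ (Fin n))) :
    (AddSubmonoid.closure s : Set (EuclideanSpace ℝ (Fin n))) ⊆ (Submodule.span ℝ s : Set _) := by
  intro x hx
  refine AddSubmonoid.closure_le (S := (Submodule.span ℝ s).toAddSubmonoid) |>.mpr ?_ hx
  exact Submodule.subset_span

lemma submonoid_closure_le_group_closure (s : Set (EuclideanSpace ℝ (Fin n))) :
    (AddSubmonoid.closure s : Set (EuclideanSpace ℝ (Fin n))) ⊆ (AddSubgroup.closure s : Set _) := by
  intro x hx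
  refine AddSubmonoid.closure_le (S := (AddSubgroup.closure s).toAddSubmonoid) |>.mpr ?_ hx
  exact AddSubgroup.subset_closure

/-- Integrality: any element of the coroot lattice has integer pairing with any root. -/
lemma exists_int_inner {Φ : Set (EuclideanSpace ℝ (Fin n))} (hΦ : IsRootSystem n Φ)
    {lam : EuclideanSpace ℝ (Fin n)} (hlam : lam ∈ AddSubgroup.closure (coroot '' Φ))
    {α : EuclideanSpace ℝ (Fin n)} (hα : α ∈ Φ) : ∃ z : ℤ, ⟪lam, α⟫ = (z : ℝ) := by
  let H : AddSubgroup (EuclideanSpace ℝ (Fin n)) :=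
  { carrier := {x | ∃ z : ℤ, ⟪x, α⟫ = (z : ℝ)}
    add_mem' := by
      rintro x y ⟨zx, hx⟩ ⟨zy, hy⟩
      exact ⟨zx + zy, by rw [inner_add_left, hx, hy]; push_cast; ring⟩
    zero_mem' := ⟨0, by simp⟩
    neg_mem' := by
      rintro x ⟨zx, hx⟩
      exact ⟨-zx, by rw [inner_neg_left, hx]; push_cast; ring⟩ }
  have : lam ∈ H := by
    refine AddSubgroup.closure_le H |>.mpr ?_ hlam
    rintro _ ⟨β, hβ, rfl⟩
    obtain ⟨z, hz⟩ := hΦ.crystallographic β hβ α hα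
    refine ⟨z, ?_⟩
    rw [coroot, real_inner_smul_left, hz, real_inner_comm α β]
    rw [div_mul_eq_mul_div, mul_comm]
  exact this

/-- A vector avoiding finitely many hyperplanes, within a subspace. -/
lemma exists_generic {U : Submodule ℝ (EuclideanSpace ℝ (Fin n))}
    {s : Set (EuclideanSpace ℝ (Fin n))} (hs : s.Finite)
    (h : ∀ γ ∈ s, ∃ u ∈ U, ⟪u, γ⟫ ≠ 0) :
    ∃ t ∈ U, ∀ γ ∈ s, ⟪t, γ⟫ ≠ 0 := by
  revert h
  refine Set.Finite.induction_on
    (motive := fun s _ => (∀ γ ∈ s, ∃ u ∈ U, ⟪u, γ⟫ ≠ 0) → ∃ t ∈ U, ∀ γ ∈ s, ⟪t, γ⟫ ≠ 0) s hs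
    (fun _ => ⟨0, U.zero_mem, by simp⟩) ?_
  intro a s ha hsf IH h
  obtain ⟨t, htU, ht⟩ := IH (fun γ hγ => h γ (Set.mem_insert_of_mem a hγ))
  obtain ⟨u, huU, hu⟩ := h a (Set.mem_insert a s)
  have hBfin : (⋃ γ ∈ insert a s, {c : ℝ | ⟪t, γ⟫ + c * ⟪u, γ⟫ = 0}).Finite := by
    refine Set.Finite.biUnion (hsf.insert a) (fun γ hγ => ?_)
    apply Set.Subsingleton.finite
    intro c1 h1 c2 h2
    simp only [Set.mem_setOf_eq] at h1 h2
    have huγ : ⟪u, γ⟫ ≠ 0 := by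
      rcases Set.mem_insert_iff.mp hγ with rfl | hγs
      · exact hu
      · intro h0
        rw [h0, mul_zero, add_zero] at h1
        exact ht γ hγs h1
    have : (c1 - c2) * ⟪u, γ⟫ = 0 := by ring_nf; linarith [h1, h2]
    rcases mul_eq_zero.mp this with h0 | h0
    · linarith [sub_eq_zero.mp h0]
    · exact absurd h0 huγ
  obtain ⟨c, hc⟩ := hBfin.infinite_compl.nonempty
  refine ⟨t + c • u, U.add_mem htU (U.smul_mem c huU), ?_⟩
  intro γ hγ
  rw [inner_add_left, real_inner_smul_left]
  intro h0
  exact hc (Set.mem_biUnion hγ h0)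

/-- A small enough `ε`. -/
lemma exists_eps {s : Set (EuclideanSpace ℝ (Fin n))} (hs : s.Finite)
    (t₀ t₁ : EuclideanSpace ℝ (Fin n)) (h : ∀ γ ∈ s, ⟪t₁, γ⟫ ≠ 0) :
    ∃ ε : ℝ, 0 < ε ∧ ∀ γ ∈ s, ε * |⟪t₀, γ⟫| < |⟪t₁, γ⟫| := by
  revert h
  refine Set.Finite.induction_on
    (motive := fun s _ => (∀ γ ∈ s, ⟪t₁, γ⟫ ≠ 0) → ∃ ε : ℝ, 0 < ε ∧ ∀ γ ∈ s, ε * |⟪t₀, γ⟫| < |⟪t₁, γ⟫|) s hs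
    (fun _ => ⟨1, one_pos, by simp⟩) ?_
  intro a s ha hsf IH h
  obtain ⟨ε, hε, hlt⟩ := IH (fun γ hγ => h γ (Set.mem_insert_of_mem a hγ))
  have h1a : 0 < |⟪t₁, a⟫| := abs_pos.mpr (h a (Set.mem_insert a s))
  set εa := |⟪t₁, a⟫| / (|⟪t₀, a⟫| + 1) with hεa
  have hεapos : 0 < εa := by positivity
  refine ⟨min ε εa, lt_min hε hεapos, ?_⟩
  intro γ hγ
  rcases Set.mem_insert_iff.mp hγ with rfl | hγs
  · calc min ε εa * |⟪t₀, γ⟫| ≤ εa * |⟪t₀, γ⟫| :=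
          mul_le_mul_of_nonneg_right (min_le_right _ _) (abs_nonneg _)
      _ < |⟪t₁, γ⟫| := by
          rw [hεa, div_mul_eq_mul_div, div_lt_iff₀ (by positivity)]
          nlinarith [abs_nonneg (⟪t₀, γ⟫ : ℝ)]
  · calc min ε εa * |⟪t₀, γ⟫| ≤ ε * |⟪t₀, γ⟫| :=
          mul_le_mul_of_nonneg_right (min_le_left _ _) (abs_nonneg _)
      _ < |⟪t₁, γ⟫| := hlt γ hγs

/-- Vectors strictly on one side of a hyperplane with pairwise non-positive inner products
are linearly independent. -/
lemma linearIndependent_of_obtuse {T : Finset (EuclideanSpace ℝ (Fin n))}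
    {t : EuclideanSpace ℝ (Fin n)}
    (hpos : ∀ v ∈ T, 0 < ⟪t, v⟫)
    (hob : ∀ v ∈ T, ∀ w ∈ T, v ≠ w → ⟪v, w⟫ ≤ 0) :
    LinearIndependent ℝ ((↑) : T → EuclideanSpace ℝ (Fin n)) := by
  rw [Fintype.linearIndependent_iff]
  intro g hg
  by_contra hcon
  push_neg at hcon
  obtain ⟨i0, hi0⟩ := hcon
  classical
  set P := Finset.univ.filter (fun i : T => 0 < g i) with hP
  set N := Finset.univ.filter (fun i : T => g i < 0) with hN
  set x := ∑ i ∈ P, g i • (i : EuclideanSpace ℝ (Fin n)) with hx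
  set y := ∑ i ∈ N, (-g i) • (i : EuclideanSpace ℝ (Fin n)) with hy
  have hdis : Disjoint P N := by
    rw [Finset.disjoint_left]
    intro i hi1 hi2
    rw [hP, Finset.mem_filter] at hi1
    rw [hN, Finset.mem_filter] at hi2
    linarith [hi1.2, hi2.2]
  have hz : ∑ i ∈ Finset.univ \ (P ∪ N), g i • (i : EuclideanSpace ℝ (Fin n)) = 0 := by
    apply Finset.sum_eq_zero
    intro i hi
    rw [Finset.mem_sdiff, Finset.mem_union] at hi
    have h1 : ¬ 0 < g i := fun hgt => hi.2 (Or.inl (by rw [hP]; simp [hgt]))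
    have h2 : ¬ g i < 0 := fun hlt => hi.2 (Or.inr (by rw [hN]; simp [hlt]))
    have hgi : g i = 0 := le_antisymm (not_lt.mp h1) (not_lt.mp h2)
    rw [hgi, zero_smul]
  have h3 := Finset.sum_sdiff (Finset.subset_univ (P ∪ N))
    (f := fun i => g i • (i : EuclideanSpace ℝ (Fin n)))
  rw [hz, zero_add] at h3
  have hPN : ∑ i ∈ P ∪ N, g i • (i : EuclideanSpace ℝ (Fin n)) = 0 := h3.trans hg
  rw [Finset.sum_union hdis] at hPN
  have hxy : x = y := by
    rw [hx, hy]
    have heq := eq_neg_of_add_eq_zero_left hPN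
    rw [heq, ← Finset.sum_neg_distrib]
    exact Finset.sum_congr rfl (fun i _ => (neg_smul (g i) _).symm)
  have hxx : ⟪x, x⟫ ≤ 0 := by
    nth_rewrite 2 [hxy]
    rw [hx, hy, sum_inner]
    apply Finset.sum_nonpos
    intro i hi
    rw [real_inner_smul_left, inner_sum]
    simp_rw [real_inner_smul_right]
    rw [hP, Finset.mem_filter] at hi
    apply mul_nonpos_of_nonneg_of_nonpos (le_of_lt hi.2)
    apply Finset.sum_nonpos
    intro j hj
    rw [hN, Finset.mem_filter] at hj
    apply mul_nonpos_of_nonneg_of_nonpos (by linarith [hj.2])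
    apply hob _ i.2 _ j.2
    intro hij
    have hij' : i = j := Subtype.coe_injective hij
    subst hij'
    linarith [hi.2, hj.2]
  have hx0 : x = 0 := inner_self_eq_zero.mp (le_antisymm hxx real_inner_self_nonneg)
  have hy0 : y = 0 := hxy ▸ hx0
  have hP0 : P = ∅ := by
    by_contra hne
    have hpos' : 0 < ⟪t, x⟫ := by
      rw [hx, inner_sum]
      simp_rw [real_inner_smul_right]
      apply Finset.sum_pos
      · intro i hi
        rw [hP, Finset.mem_filter] at hi
        exact mul_pos hi.2 (hpos _ i.2)
      · exact Finset.nonempty_of_ne_empty hne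
    rw [hx0, inner_zero_right] at hpos'
    exact lt_irrefl _ hpos'
  have hN0 : N = ∅ := by
    by_contra hne
    have hpos' : 0 < ⟪t, y⟫ := by
      rw [hy, inner_sum]
      simp_rw [real_inner_smul_right]
      apply Finset.sum_pos
      · intro i hi
        rw [hN, Finset.mem_filter] at hi
        have := hpos _ i.2
        have h2 := hi.2
        nlinarith
      · exact Finset.nonempty_of_ne_empty hne
    rw [hy0, inner_zero_right] at hpos'
    exact lt_irrefl _ hpos'
  rcases lt_trichotomy (g i0) 0 with hlt | heq | hgt
  · have : i0 ∈ N := by rw [hN]; simp [hlt]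
    rw [hN0] at this
    exact absurd this (Finset.notMem_empty _)
  · exact hi0 heq
  · have : i0 ∈ P := by rw [hP]; simp [hgt]
    rw [hP0] at this
    exact absurd this (Finset.notMem_empty _)

end Aux


section Key

variable {n : ℕ}

theorem key {Ψ : Set (EuclideanSpace ℝ (Fin n))} (hΨ : RSet n Ψ)
    {S : Set (EuclideanSpace ℝ (Fin n))} (hS : S ⊆ Ψ)
    {lam : EuclideanSpace ℝ (Fin n)} (hlam : lam ∈ AddSubgroup.closure Ψ)
    (hlamV : lam ∈ Submodule.span ℝ S) :
    ∃ (k : ℕ) (c : Fin k → ℤ) (g : Fin k → EuclideanSpace ℝ (Fin n)), (∀ i, g i ∈ Ψ) ∧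
      lam = ∑ i, c i • g i ∧ k ≤ Module.finrank ℝ (Submodule.span ℝ S) := by
  classical
  set V : Submodule ℝ (EuclideanSpace ℝ (Fin n)) := Submodule.span ℝ S with hVdef
  -- a generic functional vanishing nowhere on `Ψ`, positive-biased off `V`
  have hgen1 : ∀ γ ∈ (Ψ \ (V : Set (EuclideanSpace ℝ (Fin n)))),
      ∃ u ∈ Vᗮ, ⟪u, γ⟫ ≠ 0 := by
    intro γ hγ
    by_contra hcon
    push_neg at hcon
    have hmem : γ ∈ Vᗮᗮ := (Submodule.mem_orthogonal _ γ).mpr (fun u hu => hcon u hu)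
    rw [Submodule.orthogonal_orthogonal] at hmem
    exact hγ.2 hmem
  obtain ⟨t₁, ht₁V, ht₁⟩ := exists_generic (hΨ.finite.subset Set.diff_subset) hgen1
  obtain ⟨t₀, -, ht₀⟩ := exists_generic (U := (⊤ : Submodule ℝ (EuclideanSpace ℝ (Fin n))))
    hΨ.finite (fun γ hγ => ⟨γ, Submodule.mem_top, (hΨ.inner_self_pos hγ).ne'⟩)
  obtain ⟨ε, hε, hεlt⟩ := exists_eps (hΨ.finite.subset Set.diff_subset) t₀ t₁ ht₁
  set t : EuclideanSpace ℝ (Fin n) := t₁ + ε • t₀ with htdef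
  have ht1V : ∀ γ, γ ∈ V → ⟪t₁, γ⟫ = 0 := by
    intro γ hγ
    rw [real_inner_comm]
    exact (Submodule.mem_orthogonal V t₁).mp ht₁V γ hγ
  have habs : ∀ γ ∈ Ψ, γ ∉ V → ε * |⟪t₀, γ⟫| < |⟪t₁, γ⟫| :=
    fun γ h1 h2 => hεlt γ ⟨h1, h2⟩
  have htsplit : ∀ γ : EuclideanSpace ℝ (Fin n), ⟪t, γ⟫ = ⟪t₁, γ⟫ + ε * ⟪t₀, γ⟫ := by
    intro γ
    rw [htdef, inner_add_left, real_inner_smul_left]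
  have hf : ∀ γ ∈ Ψ, ⟪t, γ⟫ ≠ 0 := by
    intro γ hγ
    rw [htsplit]
    by_cases hv : γ ∈ V
    · rw [ht1V γ hv, zero_add]
      exact mul_ne_zero hε.ne' (ht₀ γ hγ)
    · intro h0
      have h1 : ⟪t₁, γ⟫ = -(ε * ⟪t₀, γ⟫) := by linarith
      have h2 := habs γ hγ hv
      rw [h1, abs_neg, abs_mul, abs_of_pos hε] at h2
      exact lt_irrefl _ h2
  have hsign : ∀ γ ∈ Ψ, γ ∉ V → 0 < ⟪t, γ⟫ → 0 < ⟪t₁, γ⟫ := by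
    intro γ hγ hv hpos
    rcases lt_trichotomy 0 ⟪t₁, γ⟫ with h | h | h
    · exact h
    · exact absurd h.symm (ht₁ γ ⟨hγ, hv⟩)
    · exfalso
      have h2 := habs γ hγ hv
      rw [abs_of_neg h] at h2
      rw [htsplit] at hpos
      have h3 : ε * ⟪t₀, γ⟫ ≤ ε * |⟪t₀, γ⟫| :=
        mul_le_mul_of_nonneg_left (le_abs_self _) hε.le
      linarith
  set Psp : Set (EuclideanSpace ℝ (Fin n)) := {γ | γ ∈ Ψ ∧ 0 < ⟪t, γ⟫} with hPspdef
  set Δ : Set (EuclideanSpace ℝ (Fin n)) :=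
    {γ | γ ∈ Psp ∧ ¬ ∃ a ∈ Psp, ∃ b ∈ Psp, γ = a + b} with hΔdef
  have hpm : ∀ γ ∈ Ψ, γ ∈ Psp ∨ -γ ∈ Psp := by
    intro γ hγ
    rcases lt_trichotomy 0 ⟪t, γ⟫ with h | h | h
    · exact Or.inl ⟨hγ, h⟩
    · exact absurd h.symm (hf γ hγ)
    · refine Or.inr ⟨hΨ.neg_mem hγ, ?_⟩
      rw [inner_neg_right]
      linarith
  have ht1nonneg : ∀ γ ∈ Psp, 0 ≤ ⟪t₁, γ⟫ := by
    intro γ hγ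
    by_cases hv : γ ∈ V
    · exact (ht1V γ hv).ge
    · exact (hsign γ hγ.1 hv hγ.2).le
  have hVofzero : ∀ γ ∈ Psp, ⟪t₁, γ⟫ = 0 → γ ∈ V := by
    intro γ hγ h0
    by_contra hv
    exact ht₁ γ ⟨hγ.1, hv⟩ h0
  -- decomposition into indecomposables
  set ΨF : Finset (EuclideanSpace ℝ (Fin n)) := hΨ.finite.toFinset with hΨFdef
  have main : ∀ (N : ℕ) (γ : EuclideanSpace ℝ (Fin n)), γ ∈ Psp →
      (ΨF.filter (fun δ => ⟪t, δ⟫ < ⟪t, γ⟫)).card ≤ N →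
      γ ∈ AddSubmonoid.closure Δ ∧
        (γ ∈ V → γ ∈ AddSubmonoid.closure (Δ ∩ (V : Set (EuclideanSpace ℝ (Fin n))))) := by
    intro N
    induction N with
    | zero =>
      intro γ hγ hm
      by_cases hδ : γ ∈ Δ
      · exact ⟨AddSubmonoid.subset_closure hδ,
          fun hv => AddSubmonoid.subset_closure ⟨hδ, hv⟩⟩
      · exfalso
        have hdec : ∃ a ∈ Psp, ∃ b ∈ Psp, γ = a + b := by
          by_contra hcon
          exact hδ ⟨hγ, hcon⟩
        obtain ⟨a, ha, b, hb, rfl⟩ := hdec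
        have hfa : ⟪t, a⟫ < ⟪t, a + b⟫ := by
          rw [inner_add_right]
          linarith [hb.2]
        have hma : (ΨF.filter (fun δ => ⟪t, δ⟫ < ⟪t, a⟫)).card
            < (ΨF.filter (fun δ => ⟪t, δ⟫ < ⟪t, a + b⟫)).card := by
          apply Finset.card_lt_card
          rw [Finset.ssubset_def]
          constructor
          · exact Finset.monotone_filter_right ΨF (fun δ _ hδ' => lt_trans hδ' hfa)
          · intro hsup
            have hmem : a ∈ ΨF.filter (fun δ => ⟪t, δ⟫ < ⟪t, a + b⟫) := by
              rw [Finset.mem_filter]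
              exact ⟨hΨ.finite.mem_toFinset.mpr ha.1, hfa⟩
            have := hsup hmem
            rw [Finset.mem_filter] at this
            exact lt_irrefl _ this.2
        omega
    | succ N IH =>
      intro γ hγ hm
      by_cases hδ : γ ∈ Δ
      · exact ⟨AddSubmonoid.subset_closure hδ,
          fun hv => AddSubmonoid.subset_closure ⟨hδ, hv⟩⟩
      · have hdec : ∃ a ∈ Psp, ∃ b ∈ Psp, γ = a + b := by
          by_contra hcon
          exact hδ ⟨hγ, hcon⟩
        obtain ⟨a, ha, b, hb, rfl⟩ := hdec
        have hfa : ⟪t, a⟫ < ⟪t, a + b⟫ := by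
          rw [inner_add_right]; linarith [hb.2]
        have hfb : ⟪t, b⟫ < ⟪t, a + b⟫ := by
          rw [inner_add_right]; linarith [ha.2]
        have hstep : ∀ x, x ∈ Psp → ⟪t, x⟫ < ⟪t, a + b⟫ →
            (ΨF.filter (fun δ => ⟪t, δ⟫ < ⟪t, x⟫)).card
              < (ΨF.filter (fun δ => ⟪t, δ⟫ < ⟪t, a + b⟫)).card := by
          intro x hx hfx
          apply Finset.card_lt_card
          rw [Finset.ssubset_def]
          constructor
          · exact Finset.monotone_filter_right ΨF (fun δ _ hδ' => lt_trans hδ' hfx)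
          · intro hsup
            have hmem : x ∈ ΨF.filter (fun δ => ⟪t, δ⟫ < ⟪t, a + b⟫) := by
              rw [Finset.mem_filter]
              exact ⟨hΨ.finite.mem_toFinset.mpr hx.1, hfx⟩
            have := hsup hmem
            rw [Finset.mem_filter] at this
            exact lt_irrefl _ this.2
        have Ha := IH a ha (by have := hstep a ha hfa; omega)
        have Hb := IH b hb (by have := hstep b hb hfb; omega)
        refine ⟨AddSubmonoid.add_mem _ Ha.1 Hb.1, fun hv => ?_⟩
        have hzero : ⟪t₁, a⟫ + ⟪t₁, b⟫ = 0 := by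
          have := ht1V (a + b) hv
          rwa [inner_add_right] at this
        have haz : ⟪t₁, a⟫ = 0 := by
          linarith [ht1nonneg a ha, ht1nonneg b hb]
        have hbz : ⟪t₁, b⟫ = 0 := by
          linarith [ht1nonneg a ha, ht1nonneg b hb]
        exact AddSubmonoid.add_mem _ (Ha.2 (hVofzero a ha haz)) (Hb.2 (hVofzero b hb hbz))
  have hPspΔ := fun γ hγ => main ((ΨF.filter (fun δ => ⟪t, δ⟫ < ⟪t, γ⟫)).card) γ hγ le_rfl
  -- `lam` is an integral combination of `Δ`
  have hlamΔ : lam ∈ AddSubgroup.closure Δ := by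
    refine AddSubgroup.closure_le (AddSubgroup.closure Δ) |>.mpr ?_ hlam
    intro γ hγ
    rcases hpm γ hγ with h | h
    · exact submonoid_closure_le_group_closure Δ (hPspΔ γ h).1
    · have := submonoid_closure_le_group_closure Δ (hPspΔ (-γ) h).1
      exact (AddSubgroup.neg_mem_iff _).mp this
  have hΔΨ : Δ ⊆ Ψ := fun γ hγ => hγ.1.1
  set ΔF : Finset (EuclideanSpace ℝ (Fin n)) := (hΨ.finite.subset hΔΨ).toFinset with hΔFdef
  have hΔFcoe : (ΔF : Set (EuclideanSpace ℝ (Fin n))) = Δ := (hΨ.finite.subset hΔΨ).coe_toFinset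
  have hΔFmem : ∀ δ, δ ∈ ΔF ↔ δ ∈ Δ := fun δ => (hΨ.finite.subset hΔΨ).mem_toFinset
  -- pairwise obtuse, hence independent
  have hposΔ : ∀ v ∈ ΔF, 0 < ⟪t, v⟫ := fun v hv => ((hΔFmem v).mp hv).1.2
  have hob : ∀ v ∈ ΔF, ∀ w ∈ ΔF, v ≠ w → ⟪v, w⟫ ≤ 0 := by
    intro v hv w hw hne
    rw [hΔFmem] at hv hw
    by_contra hgt
    push_neg at hgt
    have hsub := hΨ.sub_mem (hΔΨ hv) (hΔΨ hw) hgt (by exact hne)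
    rcases (hf _ hsub).lt_or_gt with hlt | hlt
    · have h1 : w - v ∈ Ψ := by
        have := hΨ.neg_mem hsub
        rwa [neg_sub] at this
      have h2 : (0:ℝ) < ⟪t, w - v⟫ := by
        rw [inner_sub_right] at hlt ⊢
        linarith
      exact hw.2 ⟨w - v, ⟨h1, h2⟩, v, hv.1, by abel⟩
    · exact hv.2 ⟨v - w, ⟨hsub, hlt⟩, w, hw.1, by abel⟩
  -- `lam` in the ℤ-span of `ΔF`
  have hlamZ : lam ∈ Submodule.span ℤ (ΔF : Set (EuclideanSpace ℝ (Fin n))) := by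
    rw [hΔFcoe]
    have := hlamΔ
    rw [← Submodule.span_int_eq_addSubgroupClosure] at this
    exact this
  obtain ⟨cz, -, hcz⟩ := Submodule.mem_span_finset.mp hlamZ
  -- `lam` in the ℝ-span of `Δ ∩ V`
  have hsubV : ∀ γ, γ ∈ Ψ → γ ∈ V →
      γ ∈ Submodule.span ℝ (Δ ∩ (V : Set (EuclideanSpace ℝ (Fin n)))) := by
    intro γ hγ hv
    rcases hpm γ hγ with h | h
    · exact submonoid_closure_le_span_real _ ((hPspΔ γ h).2 hv)
    · have hneg := submonoid_closure_le_span_real _ ((hPspΔ (-γ) h).2 (V.neg_mem hv))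
      have := Submodule.neg_mem _ hneg
      rwa [neg_neg] at this
  have hlamspan : lam ∈ Submodule.span ℝ (Δ ∩ (V : Set (EuclideanSpace ℝ (Fin n)))) := by
    have hle : V ≤ Submodule.span ℝ (Δ ∩ (V : Set (EuclideanSpace ℝ (Fin n)))) := by
      rw [hVdef]
      apply Submodule.span_le.mpr
      intro γ hγS
      exact hsubV γ (hS hγS) (Submodule.subset_span hγS)
    exact hle hlamV
  set ΔVF : Finset (EuclideanSpace ℝ (Fin n)) := ΔF.filter (fun δ => δ ∈ V) with hΔVFdef
  have hΔVFcoe : (ΔVF : Set (EuclideanSpace ℝ (Fin n)))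
      = Δ ∩ (V : Set (EuclideanSpace ℝ (Fin n))) := by
    ext δ
    simp only [hΔVFdef, Finset.coe_filter, Set.mem_setOf_eq, Set.mem_inter_iff, hΔFmem,
      SetLike.mem_coe]
  obtain ⟨d, -, hd⟩ := Submodule.mem_span_finset.mp (by rw [hΔVFcoe]; exact hlamspan :
    lam ∈ Submodule.span ℝ (ΔVF : Set (EuclideanSpace ℝ (Fin n))))
  -- vanishing of coefficients outside V
  set G : EuclideanSpace ℝ (Fin n) → ℝ :=
    fun δ => (cz δ : ℝ) - (if δ ∈ V then d δ else 0) with hGdef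
  have hGsum : ∑ δ ∈ ΔF, G δ • δ = 0 := by
    have e1 : ∑ δ ∈ ΔF, ((cz δ : ℝ)) • δ = lam := by
      rw [← hcz]
      exact Finset.sum_congr rfl (fun δ _ => by rw [Int.cast_smul_eq_zsmul])
    have e2 : ∑ δ ∈ ΔF, (if δ ∈ V then d δ else 0) • δ = lam := by
      rw [← hd, hΔVFdef, Finset.sum_filter]
      exact Finset.sum_congr rfl (fun δ _ => by rw [ite_smul, zero_smul])
    simp only [hGdef, sub_smul]
    rw [Finset.sum_sub_distrib, e1, e2, sub_self]
  have hGzero : ∀ δ ∈ ΔF, G δ = 0 := by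
    have hind := linearIndependent_of_obtuse hposΔ hob
    rw [Fintype.linearIndependent_iff] at hind
    have hconv : ∑ i : ΔF, G (i : EuclideanSpace ℝ (Fin n)) • (i : EuclideanSpace ℝ (Fin n)) = 0 := by
      rw [Finset.sum_coe_sort ΔF (fun δ => G δ • δ)]
      exact hGsum
    intro δ hδ
    exact hind (fun i => G i) hconv ⟨δ, hδ⟩
  have hvanish : ∀ δ ∈ ΔF, δ ∉ ΔVF → cz δ = 0 := by
    intro δ hδ hδV
    have hnV : δ ∉ V := by
      intro hv
      exact hδV (Finset.mem_filter.mpr ⟨hδ, hv⟩)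
    have := hGzero δ hδ
    rw [hGdef] at this
    simp only [hnV, if_false, sub_zero] at this
    exact_mod_cast this
  have hrep : lam = ∑ δ ∈ ΔVF, cz δ • δ := by
    rw [← hcz]
    exact (Finset.sum_subset (Finset.filter_subset _ _)
      (fun δ hδ hδV => by rw [hvanish δ hδ hδV, zero_smul])).symm
  -- the count
  have hindV : LinearIndependent ℝ ((↑) : ΔVF → EuclideanSpace ℝ (Fin n)) := by
    apply linearIndependent_of_obtuse (t := t)
    · intro v hv
      exact hposΔ v (Finset.mem_of_mem_filter v hv)
    · intro v hv w hw hne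
      exact hob v (Finset.mem_of_mem_filter v hv) w (Finset.mem_of_mem_filter w hw) hne
  have hcard : ΔVF.card ≤ Module.finrank ℝ V := by
    have h1 : Module.finrank ℝ (Submodule.span ℝ (ΔVF : Set (EuclideanSpace ℝ (Fin n)))) = ΔVF.card :=
      finrank_span_finset_eq_card hindV
    have h2 : Submodule.span ℝ (ΔVF : Set (EuclideanSpace ℝ (Fin n))) ≤ V := by
      apply Submodule.span_le.mpr
      intro δ hδ
      exact (Finset.mem_filter.mp hδ).2
    calc ΔVF.card = _ := h1.symm
      _ ≤ Module.finrank ℝ V := Submodule.finrank_mono h2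
  -- assemble
  set e := ΔVF.equivFin with hedef
  refine ⟨ΔVF.card, fun i => cz ((e.symm i : ΔVF) : EuclideanSpace ℝ (Fin n)),
    fun i => ((e.symm i : ΔVF) : EuclideanSpace ℝ (Fin n)), ?_, ?_, hcard⟩
  · intro i
    exact hΔΨ ((hΔFmem _).mp (Finset.mem_of_mem_filter _ (e.symm i).2))
  · rw [hrep]
    rw [← Finset.sum_coe_sort ΔVF (fun δ => cz δ • δ)]
    exact (Equiv.sum_comp e.symm (fun j : ΔVF => cz (j : EuclideanSpace ℝ (Fin n)) •
      ((j : EuclideanSpace ℝ (Fin n))))).symm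

end Key


-- ===== part 2 lemmas =====

section Group

variable {n : ℕ} {Φ : Set (EuclideanSpace ℝ (Fin n))}

lemma affRefl_apply (α : EuclideanSpace ℝ (Fin n)) (i : ℤ) (x : EuclideanSpace ℝ (Fin n)) :
    affRefl α i x = x - (⟪x, α⟫ - (i : ℝ)) • coroot α := rfl

lemma sum_coroot_mem_closure {k : ℕ} (c : Fin k → ℤ) (α : Fin k → EuclideanSpace ℝ (Fin n))
    (hα : ∀ i, α i ∈ Φ) :
    ∑ i, c i • coroot (α i) ∈ AddSubgroup.closure (coroot '' Φ) := by
  apply AddSubgroup.sum_mem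
  intro i _
  exact zsmul_mem (AddSubgroup.subset_closure (Set.mem_image_of_mem coroot (hα i))) _

lemma list_prod_zero_rep (hΦ : IsRootSystem n Φ) :
    ∀ l : List (Equiv.Perm (EuclideanSpace ℝ (Fin n))), (∀ r ∈ l, r ∈ affR Φ) →
    ∃ (c : Fin l.length → ℤ) (α : Fin l.length → EuclideanSpace ℝ (Fin n)),
      (∀ i, α i ∈ Φ) ∧ l.prod 0 = ∑ i, c i • coroot (α i) := by
  intro l
  induction l with
  | nil =>
    intro _
    exact ⟨fun i => 0, fun i => 0, fun i => i.elim0, by simp⟩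
  | cons r l IH =>
    intro hmem
    obtain ⟨c, α, hα, hsum⟩ := IH (fun r' hr' => hmem r' (List.mem_cons_of_mem r hr'))
    obtain ⟨a, ha, i, rfl⟩ := hmem r List.mem_cons_self
    have hμcl : l.prod 0 ∈ AddSubgroup.closure (coroot '' Φ) := by
      rw [hsum]; exact sum_coroot_mem_closure c α hα
    obtain ⟨z, hz⟩ := exists_int_inner hΦ hμcl ha
    refine ⟨Fin.cons (i - z) c, Fin.cons a α, ?_, ?_⟩
    · intro j
      refine Fin.cases ha (fun j' => hα j') j
    · rw [List.prod_cons, Equiv.Perm.mul_apply, affRefl_apply, hz]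
      simp only [List.length_cons, Fin.sum_univ_succ, Fin.cons_zero, Fin.cons_succ]
      rw [← Int.cast_smul_eq_zsmul ℝ (i - z) (coroot a), hsum]
      push_cast
      module

lemma intDim_le_of_list (hΦ : IsRootSystem n Φ) {lam : EuclideanSpace ℝ (Fin n)}
    (l : List (Equiv.Perm (EuclideanSpace ℝ (Fin n)))) (hl : ∀ r ∈ l, r ∈ affR Φ)
    (h0 : l.prod 0 = lam) : intDim Φ lam ≤ l.length := by
  obtain ⟨c, α, hα, hsum⟩ := list_prod_zero_rep hΦ l hl
  exact Nat.sInf_le ⟨c, α, hα, by rw [← h0, hsum]⟩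

lemma exists_list_rep (hΦ : IsRootSystem n Φ) :
    ∀ (k : ℕ) (c : Fin k → ℤ) (α : Fin k → EuclideanSpace ℝ (Fin n)), (∀ i, α i ∈ Φ) →
    ∃ l : List (Equiv.Perm (EuclideanSpace ℝ (Fin n))), (∀ r ∈ l, r ∈ affR Φ) ∧
      l.length = k ∧ l.prod 0 = ∑ i, c i • coroot (α i) := by
  intro k
  induction k with
  | zero =>
    intro c α hα
    exact ⟨[], by simp, rfl, by simp⟩
  | succ k IH =>
    intro c α hα
    obtain ⟨l, hl, hlen, hprod⟩ := IH (fun i => c i.succ) (fun i => α i.succ)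
      (fun i => hα i.succ)
    have hμcl : l.prod 0 ∈ AddSubgroup.closure (coroot '' Φ) := by
      rw [hprod]; exact sum_coroot_mem_closure _ _ (fun i => hα i.succ)
    obtain ⟨z, hz⟩ := exists_int_inner hΦ hμcl (hα 0)
    refine ⟨affRefl (α 0) (c 0 + z) :: l, ?_, by simp [hlen], ?_⟩
    · intro r hr
      rcases List.mem_cons.mp hr with rfl | hr'
      · exact ⟨α 0, hα 0, c 0 + z, rfl⟩
      · exact hl r hr'
    · rw [List.prod_cons, Equiv.Perm.mul_apply, affRefl_apply, hz, Fin.sum_univ_succ]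
      rw [← Int.cast_smul_eq_zsmul ℝ (c 0) (coroot (α 0)), hprod]
      push_cast
      module

lemma intDim_set_nonempty {lam : EuclideanSpace ℝ (Fin n)} (hlam : lam ∈ corootLattice Φ) :
    {k : ℕ | ∃ (c : Fin k → ℤ) (α : Fin k → EuclideanSpace ℝ (Fin n)),
      (∀ i, α i ∈ Φ) ∧ lam = ∑ i, c i • coroot (α i)}.Nonempty := by
  have hmem : lam ∈ Submodule.span ℤ (coroot '' Φ) := by
    have := hlam
    rw [corootLattice, ← Submodule.span_int_eq_addSubgroupClosure] at this
    exact this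
  obtain ⟨k, f, g, hsum⟩ := Submodule.mem_span_set'.mp hmem
  refine ⟨k, f, fun i => Exists.choose (g i).2, fun i => (Exists.choose_spec (g i).2).1, ?_⟩
  rw [← hsum]
  refine Finset.sum_congr rfl (fun i _ => ?_)
  rw [(Exists.choose_spec (g i).2).2]

end Group

theorem dimensions_equivalent (n : ℕ) (hn : 1 ≤ n) (Φ : Set (EuclideanSpace ℝ (Fin n))) (hΦ : IsRootSystem n Φ)
    (lam : EuclideanSpace ℝ (Fin n)) (hlam : lam ∈ corootLattice Φ) :
    realDim Φ lam = intDim Φ lam ∧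
    (intDim Φ lam : ℕ∞) =
      sInf {m : ℕ∞ | ∃ u ∈ affW Φ, u (0 : EuclideanSpace ℝ (Fin n)) = lam ∧ wordLength (affR Φ) u = m} := by
  classical
  have hRS := hΦ.rset
  have hlam' : lam ∈ AddSubgroup.closure (coroot '' Φ) := hlam
  have hne_int := intDim_set_nonempty hlam
  constructor
  · apply le_antisymm
    · -- realDim ≤ intDim
      obtain ⟨c, α, hα, hrep⟩ :
          ∃ (c : Fin (intDim Φ lam) → ℤ) (α : Fin (intDim Φ lam) → EuclideanSpace ℝ (Fin n)),
            (∀ i, α i ∈ Φ) ∧ lam = ∑ i, c i • coroot (α i) := Nat.sInf_mem hne_int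
      set Sfin : Finset (EuclideanSpace ℝ (Fin n)) :=
        Finset.image (fun i => coroot (α i)) Finset.univ with hSfin
      have hS1 : (Sfin : Set (EuclideanSpace ℝ (Fin n))) ⊆ coroot '' Φ := by
        intro x hx
        rw [hSfin, Finset.coe_image] at hx
        obtain ⟨i, -, rfl⟩ := hx
        exact ⟨α i, hα i, rfl⟩
      have hmem : lam ∈ Submodule.span ℝ (Sfin : Set (EuclideanSpace ℝ (Fin n))) := by
        rw [hrep]
        apply Submodule.sum_mem
        intro i _
        apply zsmul_mem
        apply Submodule.subset_span
        rw [hSfin]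
        simp only [Finset.coe_image, Set.mem_image, Finset.mem_coe, Finset.coe_univ,
          Set.image_univ, Set.mem_range]
        exact ⟨i, rfl⟩
      have h1 : realDim Φ lam ≤
          Module.finrank ℝ (Submodule.span ℝ (Sfin : Set (EuclideanSpace ℝ (Fin n)))) :=
        Nat.sInf_le ⟨Sfin, hS1, hmem, rfl⟩
      have h2 : Module.finrank ℝ (Submodule.span ℝ (Sfin : Set (EuclideanSpace ℝ (Fin n))))
          ≤ Sfin.card := finrank_span_finset_le_card Sfin
      have h3 : Sfin.card ≤ intDim Φ lam := by
        calc Sfin.card ≤ Finset.univ.card := Finset.card_image_le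
          _ = intDim Φ lam := by rw [Finset.card_univ, Fintype.card_fin]
      omega
    · -- intDim ≤ realDim
      have hne_real : {k : ℕ | ∃ S : Set (EuclideanSpace ℝ (Fin n)), S ⊆ coroot '' Φ ∧
          lam ∈ Submodule.span ℝ S ∧ Module.finrank ℝ ↥(Submodule.span ℝ S) = k}.Nonempty :=
        ⟨_, ⟨coroot '' Φ, subset_rfl, closure_le_span_real _ hlam', rfl⟩⟩
      obtain ⟨S, hSsub, hmem, hrank⟩ :
          ∃ S : Set (EuclideanSpace ℝ (Fin n)), S ⊆ coroot '' Φ ∧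
            lam ∈ Submodule.span ℝ S ∧
              Module.finrank ℝ ↥(Submodule.span ℝ S) = realDim Φ lam := Nat.sInf_mem hne_real
      obtain ⟨k, c, g, hgΨ, hrep, hk⟩ := key hRS hSsub hlam' hmem
      choose α hαΦ hαeq using fun i => hgΨ i
      have hle : intDim Φ lam ≤ k := by
        apply Nat.sInf_le
        refine ⟨c, α, hαΦ, ?_⟩
        rw [hrep]
        exact Finset.sum_congr rfl (fun i _ => by rw [← hαeq i])
      calc intDim Φ lam ≤ k := hle
        _ ≤ _ := hk
        _ = realDim Φ lam := hrank
  · apply le_antisymm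
    · apply le_sInf
      rintro m ⟨u, hu, h0, rfl⟩
      apply le_sInf
      rintro m' ⟨l, hl, hprod, rfl⟩
      have := intDim_le_of_list hΦ l hl (by rw [hprod, h0])
      exact_mod_cast this
    · obtain ⟨c, α, hα, hrep⟩ :
          ∃ (c : Fin (intDim Φ lam) → ℤ) (α : Fin (intDim Φ lam) → EuclideanSpace ℝ (Fin n)),
            (∀ i, α i ∈ Φ) ∧ lam = ∑ i, c i • coroot (α i) := Nat.sInf_mem hne_int
      obtain ⟨l, hl, hlen, hprod⟩ := exists_list_rep hΦ _ c α hα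
      have hu : l.prod ∈ affW Φ :=
        list_prod_mem (fun x hx => Subgroup.subset_closure (hl x hx))
      have h0 : l.prod 0 = lam := by rw [hprod, ← hrep]
      have hwl : wordLength (affR Φ) l.prod ≤ (intDim Φ lam : ℕ∞) := by
        apply sInf_le
        exact ⟨l, hl, rfl, by rw [hlen]⟩
      exact le_trans (sInf_le ⟨l.prod, hu, h0, rfl⟩) hwl

end
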